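/- arXiv:math/0108191 — 4 statements merged into one kernel-verified Lean document; each statement's English description precedes it below -/
import Mathlib

section
/- Suppose there exist unit vectors $w_1,\ldots,w_n \in \mathbb{C}^{m+1}$ and positive reals $r_1,\ldots,r_n$ with $\sum_{i=1}^n r_i\, w_i \otimes w_i^* = \Lambda \mathbb{I}$ where $\Lambda = \frac{1}{m+1}\sum_{i=1}^n r_i$. Then for each $i$, $m\, r_i \leq \sum_{j \neq i} r_j$ (the strong triangle inequalities of weight $m$). -/
/-!
Evaluating the closing condition `∑ j, r j • w j ⊗ w j* = Λ • 1` as a quadratic form at the unit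
vector `w i` gives `∑ j, r j * |⟨w j, w i⟩|² = Λ`. All terms are nonnegative and the `j = i` term
is `r i`, so `r i ≤ Λ = (∑ j, r j) / (m + 1)`, which rearranges to `m * r i ≤ ∑ j ≠ i, r j`.
-/

open Matrix

section QuadraticForm

variable {𝕜 ι n : Type*} [RCLike 𝕜] [Fintype n]

theorem star_dotProduct_vecMulVec_mulVec (u v : n → 𝕜) :
    star v ⬝ᵥ (vecMulVec u (star u) *ᵥ v) = ((‖star u ⬝ᵥ v‖ ^ 2 : ℝ) : 𝕜) := by
  rw [vecMulVec_mulVec, op_smul_eq_smul, dotProduct_smul, star_dotProduct, smul_eq_mul,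
    RCLike.star_def, RCLike.conj_mul, RCLike.norm_conj, RCLike.ofReal_pow]

theorem sum_mul_norm_sq_eq_of_sum_smul_vecMulVec_eq_smul_one [Fintype ι] [DecidableEq n]
    {r : ι → ℝ} {w : ι → n → 𝕜} {c : ℝ}
    (h : ∑ i, (r i : 𝕜) • vecMulVec (w i) (star (w i)) = (c : 𝕜) • 1)
    {v : n → 𝕜} (hv : star v ⬝ᵥ v = 1) :
    ∑ i, r i * ‖star (w i) ⬝ᵥ v‖ ^ 2 = c := by
  have := congrArg (fun A => star v ⬝ᵥ (A *ᵥ v)) h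
  simp only [sum_mulVec, smul_mulVec, dotProduct_sum, dotProduct_smul, one_mulVec, hv,
    star_dotProduct_vecMulVec_mulVec, smul_eq_mul, mul_one] at this
  exact_mod_cast this

theorem le_of_sum_smul_vecMulVec_eq_smul_one [Fintype ι] [DecidableEq n]
    {r : ι → ℝ} (hr : ∀ i, 0 ≤ r i) {w : ι → n → 𝕜} (hw : ∀ i, star (w i) ⬝ᵥ w i = 1) {c : ℝ}
    (h : ∑ i, (r i : 𝕜) • vecMulVec (w i) (star (w i)) = (c : 𝕜) • 1) (i : ι) :
    r i ≤ c := by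
  calc r i = r i * ‖star (w i) ⬝ᵥ w i‖ ^ 2 := by simp [hw i]
    _ ≤ ∑ j, r j * ‖star (w j) ⬝ᵥ w i‖ ^ 2 :=
      Finset.single_le_sum (f := fun j => r j * ‖star (w j) ⬝ᵥ w i‖ ^ 2)
        (fun j _ => mul_nonneg (hr j) (sq_nonneg _)) (Finset.mem_univ i)
    _ = c := sum_mul_norm_sq_eq_of_sum_smul_vecMulVec_eq_smul_one h (hw i)

end QuadraticForm

theorem stmt1 {m n : ℕ} (r : Fin n → ℝ) (hr : ∀ i, 0 < r i)
    (w : Fin n → Fin (m+1) → ℂ) (hw : ∀ i, star (w i) ⬝ᵥ w i = 1)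
    (Λ : ℝ) (hΛ : Λ = (∑ i, r i) / (m + 1))
    (hclosed : ∑ i, (r i : ℂ) • Matrix.vecMulVec (w i) (star (w i)) =
      (Λ : ℂ) • (1 : Matrix (Fin (m+1)) (Fin (m+1)) ℂ)) :
    ∀ i, (m : ℝ) * r i ≤ ∑ j ∈ Finset.univ.erase i, r j := by
  intro i
  have hle : r i ≤ Λ := le_of_sum_smul_vecMulVec_eq_smul_one (fun j => (hr j).le) hw hclosed i
  rw [hΛ, le_div_iff₀ (by positivity), ← Finset.add_sum_erase _ _ (Finset.mem_univ i)] at hle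
  linarith
end

section
/- Suppose $\mathbf{r} \in W_{I,J,k}$, i.e., $r_1,\ldots,r_n > 0$ satisfy the strong triangle inequalities of weight $m$ and $k\sum_{i\in I} r_i = (m-k+1)\sum_{j\in J} r_j$ for a proper partition $I \cup J$ of $\{1,\ldots,n\}$ and $1 \leq k \leq m$. Then $\mathbf{r}_I = (r_i)_{i\in I}$ satisfies the strong triangle inequalities of weight $m-k$ and $\mathbf{r}_J = (r_j)_{j\in J}$ satisfies the strong triangle inequalities of weight $k-1$; explicitly, $r_i \leq \frac{1}{m-k+1}\sum_{i'\in I} r_{i'}$ for all $i \in I$, and $r_j \leq \frac{1}{k}\sum_{j'\in J} r_{j'}$ for all $j \in J$. -/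
/-! On the wall, `ρ_I / (m - k + 1) = ρ_J / k = ρ / (m + 1)`, and the strong triangle inequalities
of weight `m` say precisely that every `r_i` is at most `ρ / (m + 1)`. -/

open Finset

variable {ι : Type*} [Fintype ι] {r : ι → ℝ}

lemma add_one_mul_le_sum_of_mul_le_sum_erase [DecidableEq ι] {m : ℝ} {i : ι}
    (h : m * r i ≤ ∑ j ∈ univ.erase i, r j) : (m + 1) * r i ≤ ∑ j, r j := by
  have := add_sum_erase univ r (mem_univ i)
  linarith

lemma le_sum_div_of_mul_sum_eq {c a : ℝ} {s : Finset ι} (hc : 0 < c) (ha : 0 < a)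
    (hr : ∀ i, c * r i ≤ ∑ j, r j) (hs : c * ∑ i ∈ s, r i = a * ∑ j, r j) (i : ι) :
    r i ≤ (∑ i ∈ s, r i) / a := by
  rw [le_div_iff₀ ha]
  refine le_of_mul_le_mul_left ?_ hc
  calc c * (r i * a) = a * (c * r i) := by ring
    _ ≤ a * ∑ j, r j := mul_le_mul_of_nonneg_left (hr i) ha.le
    _ = c * ∑ i ∈ s, r i := hs.symm

theorem stmt3_general {m n k : ℕ} (r : Fin n → ℝ)
    (hsti : ∀ i, (m : ℝ) * r i ≤ ∑ j ∈ Finset.univ.erase i, r j)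
    (I J : Finset (Fin n)) (hIJ : Disjoint I J) (hunion : I ∪ J = Finset.univ)
    (hk1 : 1 ≤ k) (hkm : k ≤ m)
    (hwall : (k : ℝ) * ∑ i ∈ I, r i = ((m : ℝ) - k + 1) * ∑ j ∈ J, r j) :
    (∀ i ∈ I, r i ≤ (∑ i' ∈ I, r i') / ((m : ℝ) - k + 1)) ∧
      (∀ j ∈ J, r j ≤ (∑ j' ∈ J, r j') / (k : ℝ)) := by
  have hρ : ∑ i ∈ I, r i + ∑ j ∈ J, r j = ∑ j, r j := by rw [← sum_union hIJ, hunion]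
  have hk : (1 : ℝ) ≤ k := by exact_mod_cast hk1
  have hkm' : (k : ℝ) ≤ m := by exact_mod_cast hkm
  have htri : ∀ i, ((m : ℝ) + 1) * r i ≤ ∑ j, r j :=
    fun i => add_one_mul_le_sum_of_mul_le_sum_erase (hsti i)
  refine ⟨fun i _ => le_sum_div_of_mul_sum_eq (by linarith) (by linarith) htri ?_ i,
    fun j _ => le_sum_div_of_mul_sum_eq (by linarith) (by linarith) htri ?_ j⟩
  · linear_combination hwall + ((m : ℝ) - k + 1) * hρ
  · linear_combination -hwall + (k : ℝ) * hρ

theorem stmt3 {m n k : ℕ} (r : Fin n → ℝ) (hr : ∀ i, 0 < r i)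
    (hsti : ∀ i, (m : ℝ) * r i ≤ ∑ j ∈ Finset.univ.erase i, r j)
    (I J : Finset (Fin n)) (hIJ : Disjoint I J) (hunion : I ∪ J = Finset.univ)
    (hI : I.Nonempty) (hJ : J.Nonempty)
    (hk1 : 1 ≤ k) (hkm : k ≤ m)
    (hwall : (k : ℝ) * ∑ i ∈ I, r i = ((m : ℝ) - k + 1) * ∑ j ∈ J, r j) :
    (∀ i ∈ I, r i ≤ (∑ i' ∈ I, r i') / ((m : ℝ) - k + 1)) ∧
      (∀ j ∈ J, r j ≤ (∑ j' ∈ J, r j') / (k : ℝ)) :=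
  stmt3_general r hsti I J hIJ hunion hk1 hkm hwall
end

section
/- Let $e_1,\ldots,e_n$ be Hermitian matrices, let $I \subseteq J \subseteq \{1,\ldots,n\}$, set $A_I = \sum_{i\in I} e_i$ and $A_J = \sum_{j \in J} e_j$, and let $E$, $F$ be spectral projections of $A_I$ and $A_J$ respectively. Then $\sum_{s \in I} \mathrm{Im\,Tr}\big(e_s\,[\sqrt{-1}E, \sqrt{-1}F]\big) = 0$; equivalently $\mathrm{Im\,Tr}([A_I, E] F) = 0$. (Involutivity of bending Hamiltonians.) -/
open Matrix

/-
Summing over `s ∈ I` turns `∑ Tr(e_s X)` into `Tr(A_I X)`, and the commutator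
`[√-1 E, √-1 F]` is `-[E, F]`. Cycling the trace gives `Tr(A_I [E, F]) = Tr([A_I, E] F)`,
which vanishes because `A_I` commutes with its spectral projection `E`.
-/

namespace Matrix

variable {ι R : Type*} [Fintype ι] [CommRing R]

theorem trace_mul_commutator (A E F : Matrix ι ι R) :
    (A * (E * F - F * E)).trace = ((A * E - E * A) * F).trace := by
  rw [mul_sub, sub_mul, trace_sub, trace_sub, ← mul_assoc, ← mul_assoc,
    trace_mul_comm (A * F) E, mul_assoc E A F]

theorem smul_commutator_smul (c : R) (E F : Matrix ι ι R) :
    c • E * (c • F) - c • F * (c • E) = (c * c) • (E * F - F * E) := by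
  rw [smul_mul_smul_comm, smul_mul_smul_comm, smul_sub]

end Matrix

theorem stmt13_general {m n : ℕ} (e : Fin n → Matrix (Fin (m+1)) (Fin (m+1)) ℂ)
    (I : Finset (Fin n))
    (AI : Matrix (Fin (m+1)) (Fin (m+1)) ℂ)
    (hAI : AI = ∑ s ∈ I, e s)
    (E F : Matrix (Fin (m+1)) (Fin (m+1)) ℂ)
    (hEc : Commute AI E) :
    (∑ s ∈ I,
        ((e s * (Complex.I • E * (Complex.I • F) - Complex.I • F * (Complex.I • E))).trace).im)
        = 0 ∧
      (((AI * E - E * AI) * F).trace).im = 0 := by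
  have hcomm : AI * E - E * AI = 0 := sub_eq_zero.2 hEc
  refine ⟨?_, by rw [hcomm, zero_mul, trace_zero, Complex.zero_im]⟩
  rw [← Complex.im_sum, ← trace_sum, ← Finset.sum_mul, ← hAI, smul_commutator_smul,
    Complex.I_mul_I, mul_smul_comm, trace_smul, trace_mul_commutator, hcomm, zero_mul,
    trace_zero, smul_zero, Complex.zero_im]

theorem stmt13 {m n : ℕ} (e : Fin n → Matrix (Fin (m+1)) (Fin (m+1)) ℂ)
    (he : ∀ s, (e s).IsHermitian)
    (I J : Finset (Fin n)) (hIJ : I ⊆ J)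
    (AI AJ : Matrix (Fin (m+1)) (Fin (m+1)) ℂ)
    (hAI : AI = ∑ s ∈ I, e s) (hAJ : AJ = ∑ s ∈ J, e s)
    (E F : Matrix (Fin (m+1)) (Fin (m+1)) ℂ)
    (hE : E.IsHermitian) (hF : F.IsHermitian)
    (hE2 : E * E = E) (hF2 : F * F = F)
    (hEc : Commute AI E) (hFc : Commute AJ F) :
    (∑ s ∈ I,
        ((e s * (Complex.I • E * (Complex.I • F) - Complex.I • F * (Complex.I • E))).trace).im)
        = 0 ∧
      (((AI * E - E * AI) * F).trace).im = 0 :=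
  stmt13_general e I AI hAI E F hEc
end

section
/- Let $\mathbf{e}=(e_1,\ldots,e_5)$ be a pentagon in $\mathbb{R}^3$, i.e., vectors with $\sum_{i=1}^5 e_i = 0$ and fixed lengths $\|e_i\| = r_i > 0$. If the bending flow about the diagonal $e_1+e_2$ (given by $\dot e_1 = e_2\times e_1$, $\dot e_2 = e_1\times e_2$, $\dot e_i = 0$ for $i>2$) leaves the function $H_5(\mathbf{e}) = \sum_{i=1}^4 \frac{e_i\cdot e_5}{\alpha_i - \alpha_5}$ invariant for all pentagons (where $\alpha_1,\ldots,\alpha_5$ are constants with $\alpha_i \neq \alpha_5$ for $i<5$), then $\alpha_1 = \alpha_2$. -/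
open Matrix Real

/-!
Rotating the triangle `e₁, e₂` of a pentagon rigidly about its diagonal `e₁ + e₂` is a solution
of the bending flow.  For the pentagon with diagonal `e₁ + e₂ = (0, 0, 1)`, `e₅ = (0, 1, 0)` and
`e₁ = (cos t, sin t, 1)`, the Hamiltonian `H₅` equals
`sin t · (1 / (α₁ - α₅) - 1 / (α₂ - α₅))` plus a constant, so its invariance forces
`1 / (α₁ - α₅) = 1 / (α₂ - α₅)`.  In the code the indices are shifted: `e 0` is `e₁`.
-/

def bendingField (e : Fin 5 → Fin 3 → ℝ) : Fin 5 → Fin 3 → ℝ :=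
  fun k => if k = 0 then e 1 ⨯₃ e 0 else if k = 1 then e 0 ⨯₃ e 1 else 0

noncomputable def hamiltonian (α : Fin 5 → ℝ) (e : Fin 5 → Fin 3 → ℝ) : ℝ :=
  ∑ i ∈ Finset.univ.erase (4 : Fin 5), (e i ⬝ᵥ e 4) / (α i - α 4)

noncomputable def horizontalCircle (t : ℝ) : Fin 3 → ℝ := ![cos t, sin t, 0]

theorem hasDerivAt_horizontalCircle (t : ℝ) :
    HasDerivAt horizontalCircle (![0, 0, 1] ⨯₃ horizontalCircle t) t := by
  rw [hasDerivAt_pi]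
  intro j
  fin_cases j
  · simpa [horizontalCircle, cross_apply] using hasDerivAt_cos t
  · simpa [horizontalCircle, cross_apply] using hasDerivAt_sin t
  · simpa [horizontalCircle, cross_apply] using hasDerivAt_const t (0 : ℝ)

theorem horizontalCircle_ne_zero (t : ℝ) : horizontalCircle t ≠ 0 := by
  intro h
  have hcos : cos t = 0 := congrFun h 0
  have hsin : sin t = 0 := congrFun h 1
  simpa [hcos, hsin] using sin_sq_add_cos_sq t

noncomputable def rotatingPentagon (t : ℝ) : Fin 5 → Fin 3 → ℝ :=
  ![horizontalCircle t + ![0, 0, 1], -horizontalCircle t, ![1, 0, 0], ![-1, -1, -1], ![0, 1, 0]]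

theorem rotatingPentagon_sum_eq_zero (t : ℝ) : ∑ k, rotatingPentagon t k = 0 := by
  ext j
  fin_cases j <;> simp [rotatingPentagon, horizontalCircle, Fin.sum_univ_five]

theorem rotatingPentagon_ne_zero (t : ℝ) (k : Fin 5) : rotatingPentagon t k ≠ 0 := by
  fin_cases k
  · exact fun h => by simpa [rotatingPentagon, horizontalCircle] using congrFun h 2
  · exact neg_ne_zero.mpr (horizontalCircle_ne_zero t)
  all_goals simp [rotatingPentagon, funext_iff, Fin.forall_fin_succ]

theorem hasDerivAt_rotatingPentagon (t : ℝ) :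
    HasDerivAt rotatingPentagon (bendingField (rotatingPentagon t)) t := by
  have hc := hasDerivAt_horizontalCircle t
  rw [hasDerivAt_pi]
  intro k
  fin_cases k
  · refine (hc.add_const ![0, 0, 1]).congr_deriv ?_
    show _ = -horizontalCircle t ⨯₃ (horizontalCircle t + ![0, 0, 1])
    rw [map_neg, LinearMap.neg_apply, map_add, cross_self, zero_add, cross_anticomm]
  · refine hc.neg.congr_deriv ?_
    show _ = (horizontalCircle t + ![0, 0, 1]) ⨯₃ -horizontalCircle t
    rw [map_add, LinearMap.add_apply, map_neg, map_neg, cross_self, neg_zero, zero_add]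
  all_goals exact hasDerivAt_const t _

theorem hamiltonian_rotatingPentagon (α : Fin 5 → ℝ) (t : ℝ) :
    hamiltonian α (rotatingPentagon t) =
      sin t * (1 / (α 0 - α 4) - 1 / (α 1 - α 4)) - 1 / (α 3 - α 4) := by
  simp [hamiltonian, rotatingPentagon, horizontalCircle, Finset.sum_erase_eq_sub,
    Fin.sum_univ_five, dotProduct, Fin.sum_univ_three]
  ring

theorem stmt18_general (α : Fin 5 → ℝ)
    (hinv : ∀ e : ℝ → Fin 5 → Fin 3 → ℝ,
      (∀ t, ∑ k, e t k = 0) →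
      (∀ t k, e t k ≠ 0) →
      (∀ t, HasDerivAt e
        (fun k => if k = (0 : Fin 5) then crossProduct (e t 1) (e t 0)
          else if k = (1 : Fin 5) then crossProduct (e t 0) (e t 1)
          else 0) t) →
      ∀ t, (∑ i ∈ Finset.univ.erase (4 : Fin 5), (e t i ⬝ᵥ e t 4) / (α i - α 4)) =
        ∑ i ∈ Finset.univ.erase (4 : Fin 5), (e 0 i ⬝ᵥ e 0 4) / (α i - α 4)) :
    α 0 = α 1 := by
  have hH : hamiltonian α (rotatingPentagon (π / 2)) = hamiltonian α (rotatingPentagon 0) :=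
    hinv rotatingPentagon rotatingPentagon_sum_eq_zero rotatingPentagon_ne_zero
      hasDerivAt_rotatingPentagon (π / 2)
  rw [hamiltonian_rotatingPentagon, hamiltonian_rotatingPentagon, sin_pi_div_two, sin_zero] at hH
  have hinv_eq : 1 / (α 0 - α 4) = 1 / (α 1 - α 4) := by linarith
  simpa only [one_div, _root_.inv_inj, sub_left_inj] using hinv_eq

theorem stmt18 (α : Fin 5 → ℝ) (hα : ∀ i : Fin 5, i ≠ 4 → α i ≠ α 4)
    (hinv : ∀ e : ℝ → Fin 5 → Fin 3 → ℝ,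
      (∀ t, ∑ k, e t k = 0) →
      (∀ t k, e t k ≠ 0) →
      (∀ t, HasDerivAt e
        (fun k => if k = (0 : Fin 5) then crossProduct (e t 1) (e t 0)
          else if k = (1 : Fin 5) then crossProduct (e t 0) (e t 1)
          else 0) t) →
      ∀ t, (∑ i ∈ Finset.univ.erase (4 : Fin 5), (e t i ⬝ᵥ e t 4) / (α i - α 4)) =
        ∑ i ∈ Finset.univ.erase (4 : Fin 5), (e 0 i ⬝ᵥ e 0 4) / (α i - α 4)) :
    α 0 = α 1 :=
  stmt18_general α hinv
end
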